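/- If a graph G (finite, undirected; parallel edges and self-loops allowed) has a (2,1)-edge-order (through some edge rt and avoiding some edge ru), then G is 3-edge-connected. -/

import Mathlib

namespace EdgeOrders

variable {V E V' E' : Type}

/-- A multigraph on vertex type `V` and edge type `E` is given by a map `ends`
sending each edge to the unordered pair of its endpoints (self-loops and
parallel edges are allowed).
`IsWalkSeq ends vs es` states that `vs` is the vertex sequence and `es` the
edge sequence of a walk in this multigraph. -/
inductive IsWalkSeq (ends : E → Sym2 V) : List V → List E → Prop
  | nil (v : V) : IsWalkSeq ends [v] []
  | cons {u v : V} {vs : List V} {e : E} {es : List E} :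
      ends e = s(u, v) → IsWalkSeq ends (v :: vs) es →
      IsWalkSeq ends (u :: v :: vs) (e :: es)

/-- There is a walk from `u` to `v` using only edges from `S`. -/
def HasWalk (ends : E → Sym2 V) (S : Set E) (u v : V) : Prop :=
  ∃ vs es, IsWalkSeq ends vs es ∧ vs.head? = some u ∧ vs.getLast? = some v ∧
    ∀ e ∈ es, e ∈ S

/-- A multigraph is `k`-edge-connected if it has at least two vertices and no
edge-cut of size less than `k`: removing fewer than `k` edges leaves all
vertices connected to each other. -/
def EdgeConnected [Fintype V] [Fintype E] (ends : E → Sym2 V) (k : ℕ) : Prop :=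
  2 ≤ Fintype.card V ∧
    ∀ F : Finset E, F.card < k → ∀ u v : V, HasWalk ends {e | e ∉ F} u v

/-- Two edges are neighbors if they share a common vertex. -/
def Neighbors (ends : E → Sym2 V) (e f : E) : Prop :=
  ∃ x, x ∈ ends e ∧ x ∈ ends f

/-- A (1,1)-edge-order through the (non-self-loop) edge `st` with endpoints
`s` and `t`: a (strict) total order `lt` on `E - {st}` such that `m ≥ 2`,
every edge not incident to `s` has a smaller neighbor and every edge not
incident to `t` has a larger neighbor. -/
def IsOneOneEdgeOrder [Fintype E] (ends : E → Sym2 V) (s t : V) (st : E)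
    (lt : E → E → Prop) : Prop :=
  2 ≤ Fintype.card E ∧
  (∀ e f, lt e f → e ≠ st ∧ f ≠ st) ∧
  (∀ e, ¬ lt e e) ∧
  (∀ e f g, lt e f → lt f g → lt e g) ∧
  (∀ e f, e ≠ st → f ≠ st → e ≠ f → lt e f ∨ lt f e) ∧
  (∀ e, e ≠ st → s ∉ ends e → ∃ f, Neighbors ends e f ∧ lt f e) ∧
  (∀ e, e ≠ st → t ∉ ends e → ∃ f, Neighbors ends e f ∧ lt e f)

/-- An ear: a subgraph given as the vertex sequence and edge sequence of a
walk (a path, or a cycle when the first and last vertices coincide). -/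
structure Ear (V E : Type) where
  verts : List V
  edges : List E

/-- An ear decomposition `(P₀, …, P_len)` of the multigraph given by `ends`:
a sequence of ears partitioning the edge set, where `P₀` is a cycle that is
not a self-loop, and each later ear is either a path intersecting the union
of the previous ears exactly in its two endpoints, or a cycle intersecting it
in a unique vertex. -/
structure EarDecomposition (ends : E → Sym2 V) where
  len : ℕ
  ears : Fin (len + 1) → Ear V E
  /-- every ear is a walk in the graph -/
  walk : ∀ i, IsWalkSeq ends (ears i).verts (ears i).edges
  /-- no ear repeats an edge -/
  edges_nodup : ∀ i, (ears i).edges.Nodup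
  /-- the ears partition the edge set -/
  partition : ∀ e : E, ∃! i, e ∈ (ears i).edges
  /-- the ears cover all vertices (their union is the whole graph) -/
  covers : ∀ v : V, ∃ i, v ∈ (ears i).verts
  /-- every ear contains at least one edge -/
  ear_nonempty : ∀ i, (ears i).edges ≠ []
  /-- `P₀` is a cycle … -/
  first_closed : (ears 0).verts.head? = (ears 0).verts.getLast?
  first_nodup : (ears 0).verts.tail.Nodup
  /-- … that is not a self-loop -/
  first_not_loop : 2 ≤ (ears 0).edges.length
  /-- every later ear is a path (distinct vertices) or a cycle (closed, with
  distinct vertices except for the repeated endpoint) -/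
  ear_path_or_cycle : ∀ i : Fin (len + 1), 0 < (i : ℕ) →
    (ears i).verts.Nodup ∨
      ((ears i).verts.head? = (ears i).verts.getLast? ∧ (ears i).verts.tail.Nodup)
  /-- the endpoint(s) of a later ear lie in the union of the previous ears -/
  ear_endpoints : ∀ i : Fin (len + 1), 0 < (i : ℕ) → ∀ x : V,
    ((ears i).verts.head? = some x ∨ (ears i).verts.getLast? = some x) →
      ∃ j, j < i ∧ x ∈ (ears j).verts
  /-- the inner vertices of a later ear avoid all previous ears -/
  ear_inner_new : ∀ i : Fin (len + 1), 0 < (i : ℕ) →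
    ∀ x ∈ (ears i).verts.tail.dropLast, ∀ j, j < i → x ∉ (ears j).verts

variable {ends : E → Sym2 V}

/-- The vertex set of `G_{i-1} = P₀ ∪ ⋯ ∪ P_{i-1}`. -/
def EarDecomposition.prevVerts (D : EarDecomposition ends) (i : Fin (D.len + 1)) : Set V :=
  {x | ∃ j, j < i ∧ x ∈ (D.ears j).verts}

/-- `inner(P_i)`, the set of inner vertices of the `i`-th ear. -/
def EarDecomposition.innerVerts (D : EarDecomposition ends) (i : Fin (D.len + 1)) : Set V :=
  {x | x ∈ (D.ears i).verts ∧ x ∉ D.prevVerts i}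

/-- The edge set `E - E_i` of `\overline{G_i}`. -/
def EarDecomposition.remEdges (D : EarDecomposition ends) (i : Fin (D.len + 1)) : Set E :=
  {e | ∃ j, i < j ∧ e ∈ (D.ears j).edges}

/-- `birth(e)`: the index of the unique ear containing the edge `e`. -/
noncomputable def EarDecomposition.birthE (D : EarDecomposition ends) (e : E) :
    Fin (D.len + 1) := (D.partition e).exists.choose

open Classical in
/-- `last(v)`: the maximal index `birth(vw)` over all edges `vw` incident to `v`. -/
noncomputable def EarDecomposition.lastV [Fintype E] (D : EarDecomposition ends) (v : V) : ℕ :=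
  (Finset.univ.filter fun e => v ∈ ends e).sup fun e => (D.birthE e : ℕ)

/-- The vertices of the subgraph induced by the edge set `S`. -/
def coverVerts (ends : E → Sym2 V) (S : Set E) : Set V :=
  {v | ∃ e ∈ S, v ∈ ends e}

/-- The subgraph induced by the edge set `S` is connected. -/
def ConnectedOn (ends : E → Sym2 V) (S : Set E) : Prop :=
  ∀ u ∈ coverVerts ends S, ∀ v ∈ coverVerts ends S, HasWalk ends S u v

/-- Definition 4.1: `D` is a (2,1)-edge-order through `rt` avoiding `ru`:
(1) `rt ∈ P₀`; (2) the last ear is the short ear `ru`; (3) non-separateness: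
for every `i < m - n`, `\overline{G_i}` contains all inner vertices of `P_i`
and, if `P_i` is short, at least one endpoint of `P_i`. -/
def IsTwoOneEdgeOrder (D : EarDecomposition ends) (rt ru : E) : Prop :=
  rt ∈ (D.ears 0).edges ∧
  (D.ears (Fin.last D.len)).edges = [ru] ∧
  ∀ i : Fin (D.len + 1), (i : ℕ) < D.len →
    (∀ x ∈ D.innerVerts i, x ∈ coverVerts ends (D.remEdges i)) ∧
    ((D.ears i).edges.length = 1 →
      ∃ x, ((D.ears i).verts.head? = some x ∨ (D.ears i).verts.getLast? = some x) ∧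
        x ∈ coverVerts ends (D.remEdges i))

open Classical in
/-- The degree of a vertex in a multigraph; self-loops count twice. -/
noncomputable def degree [Fintype E] (ends : E → Sym2 V) (v : V) : ℕ :=
  ∑ e : E, (if ends e = s(v, v) then 2 else if v ∈ ends e then 1 else 0)

/-- `T` is the edge set of a tree on the vertex set `W`: all its edges join
vertices of `W`, it connects any two vertices of `W`, and it contains no
nonempty closed trail (i.e. no cycle). -/
def IsTreeOn (ends : E → Sym2 V) (W : Set V) (T : Set E) : Prop :=
  (∀ e ∈ T, ∀ x, x ∈ ends e → x ∈ W) ∧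
  (∀ u ∈ W, ∀ v ∈ W, HasWalk ends T u v) ∧
  (∀ vs es, IsWalkSeq ends vs es → (∀ e ∈ es, e ∈ T) → es.Nodup →
    vs.head? = vs.getLast? → es = [])

/-- `T` is the edge set of a spanning tree of the whole multigraph. -/
def IsSpanningTree (ends : E → Sym2 V) (T : Set E) : Prop :=
  IsTreeOn ends Set.univ T

/-- `(vs, es)` is a (simple) path from `x` to `r` using only edges of `T`. -/
def IsPathIn (ends : E → Sym2 V) (T : Set E) (x r : V)
    (vs : List V) (es : List E) : Prop :=
  IsWalkSeq ends vs es ∧ vs.Nodup ∧ vs.head? = some x ∧ vs.getLast? = some r ∧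
    ∀ e ∈ es, e ∈ T

/-- The paths from `x` to the common root `r` inside `T₁` and inside `T₂` are
edge-disjoint. -/
def EdgeIndepFrom (ends : E → Sym2 V) (T₁ T₂ : Set E) (r x : V) : Prop :=
  ∀ vs₁ es₁ vs₂ es₂, IsPathIn ends T₁ x r vs₁ es₁ → IsPathIn ends T₂ x r vs₂ es₂ →
    ∀ e ∈ es₁, e ∉ es₂

/-
Let `F` be a set of at most two edges and `P` a side of a cut, containing `r`, that is crossed
only by edges of `F`. The first ear `P_j` meeting the other side has both ends on side `P` (or is
the closed ear `P₀`, which contains `r`), so it crosses the cut an even, positive number of times: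
`F` consists of two edges of `P_j`, and no other ear crosses the cut. Hence the last ear `ru` lies
on side `P`, and the last ear `P_K` meeting the other side is not the last ear. Non-separateness at
`K` yields a vertex of `P_K` lying on a later ear, which therefore lies on side `P`; but it can be
taken on the other side: an inner vertex of `P_j` if `K = j`, and any vertex of `P_K` otherwise,
since then `P_K` does not cross the cut.
-/

theorem _root_.List.Nodup.mem_of_card_le_countP {α : Type} [DecidableEq α] {l : List α}
    (hl : l.Nodup) {p : α → Bool} {F : Finset α} (hsub : ∀ x ∈ l, p x → x ∈ F)
    (hcard : F.card ≤ l.countP p) {x : α} (hx : x ∈ F) : x ∈ l := by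
  have hfilter : (l.filter p).toFinset = F := by
    refine Finset.eq_of_subset_of_card_le (fun y hy => ?_) ?_
    · obtain ⟨hyl, hpy⟩ := List.mem_filter.mp (List.mem_toFinset.mp hy)
      exact hsub y hyl hpy
    · rwa [List.toFinset_card_of_nodup (hl.filter p), ← List.countP_eq_length_filter]
  rw [← hfilter, List.mem_toFinset] at hx
  exact List.mem_of_mem_filter hx

section Walks

variable {P : V → Prop} {vs : List V} {es : List E}

theorem IsWalkSeq.ne_nil (h : IsWalkSeq ends vs es) : vs ≠ [] := by
  cases h <;> simp

theorem IsWalkSeq.length_eq (h : IsWalkSeq ends vs es) : vs.length = es.length + 1 := by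
  induction h with
  | nil => rfl
  | cons _ _ ih => simp [ih]

theorem IsWalkSeq.snoc {x y : V} {e : E} (h : IsWalkSeq ends vs es)
    (hx : vs.getLast? = some x) (he : ends e = s(x, y)) :
    IsWalkSeq ends (vs ++ [y]) (es ++ [e]) := by
  induction h with
  | nil v =>
    obtain rfl : v = x := by simpa using hx
    exact .cons he (.nil y)
  | cons he' _ ih =>
    rw [List.getLast?_cons_cons] at hx
    exact .cons he' (ih hx)

theorem IsWalkSeq.mem_verts_of_mem_ends (h : IsWalkSeq ends vs es) {e : E} (he : e ∈ es)
    {x : V} (hx : x ∈ ends e) : x ∈ vs := by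
  induction h with
  | nil => simp at he
  | cons he' _ ih =>
    rcases List.mem_cons.mp he with rfl | he
    · rw [he'] at hx
      rcases Sym2.mem_iff.mp hx with rfl | rfl <;> simp
    · exact List.mem_cons_of_mem _ (ih he)

theorem hasWalk_self (S : Set E) (v : V) : HasWalk ends S v v :=
  ⟨[v], [], .nil v, rfl, rfl, by simp⟩

theorem HasWalk.step {S : Set E} {u x y : V} {e : E} (h : HasWalk ends S u x) (heS : e ∈ S)
    (he : ends e = s(x, y)) : HasWalk ends S u y := by
  obtain ⟨vs, es, hw, hu, hx, hS⟩ := h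
  refine ⟨vs ++ [y], es ++ [e], hw.snoc hx he, ?_, by simp, ?_⟩
  · rwa [List.head?_append_of_ne_nil _ hw.ne_nil]
  · simpa [or_imp, forall_and] using ⟨hS, heS⟩

def CrossesCut (ends : E → Sym2 V) (P : V → Prop) (e : E) : Prop :=
  ∃ x y, ends e = s(x, y) ∧ ¬(P x ↔ P y)

theorem crossesCut_iff {e : E} {x y : V} (h : ends e = s(x, y)) :
    CrossesCut ends P e ↔ ¬(P x ↔ P y) := by
  refine ⟨?_, fun hxy => ⟨x, y, h, hxy⟩⟩
  rintro ⟨a, b, hab, hne⟩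
  rcases Sym2.eq_iff.mp (h.symm.trans hab) with ⟨rfl, rfl⟩ | ⟨rfl, rfl⟩
  · exact hne
  · exact fun hxy => hne hxy.symm

theorem IsWalkSeq.iff_of_forall_not_crossesCut (h : IsWalkSeq ends vs es)
    (hc : ∀ e ∈ es, ¬CrossesCut ends P e) {v w : V} (hv : v ∈ vs) (hw : w ∈ vs) :
    P v ↔ P w := by
  induction h generalizing v w with
  | nil => rw [List.mem_singleton.mp hv, List.mem_singleton.mp hw]
  | @cons u x _ e _ he _ ih =>
    have hc' : ∀ e' ∈ _, ¬CrossesCut ends P e' :=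
      fun e' he' => hc e' (List.mem_cons_of_mem _ he')
    have hux : P u ↔ P x := not_not.mp ((crossesCut_iff he).not.mp (hc e List.mem_cons_self))
    have hx : ∀ v ∈ u :: x :: _, P v ↔ P x := fun v hv =>
      (List.mem_cons.mp hv).elim (fun h => h ▸ hux) (fun hv => ih hc' hv List.mem_cons_self)
    exact (hx v hv).trans (hx w hw).symm

open Classical in
theorem IsWalkSeq.iff_iff_even_countP_crossesCut (h : IsWalkSeq ends vs es) {a b : V}
    (ha : vs.head? = some a) (hb : vs.getLast? = some b) :
    (P a ↔ P b) ↔ Even (es.countP fun e => decide (CrossesCut ends P e)) := by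
  induction h generalizing a with
  | nil v =>
    obtain rfl : v = a := by simpa using ha
    obtain rfl : v = b := by simpa using hb
    simp
  | @cons u x _ e _ he _ ih =>
    obtain rfl := Option.some.inj ha
    rw [List.getLast?_cons_cons] at hb
    have hih := ih rfl hb
    by_cases hcr : CrossesCut ends P e
    · rw [List.countP_cons, if_pos (decide_eq_true hcr), Nat.even_add_one, ← hih]
      rw [crossesCut_iff he] at hcr
      tauto
    · rw [List.countP_cons, if_neg (by simpa using hcr), Nat.add_zero, ← hih]
      rw [crossesCut_iff he, not_not] at hcr
      exact ⟨fun h => hcr.symm.trans h, fun h => hcr.trans h⟩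

open Classical in
theorem IsWalkSeq.two_le_countP_crossesCut (h : IsWalkSeq ends vs es) {a b x y : V}
    (ha : vs.head? = some a) (hb : vs.getLast? = some b) (hab : P a ↔ P b)
    (hx : x ∈ vs) (hPx : P x) (hy : y ∈ vs) (hPy : ¬P y) :
    2 ≤ es.countP fun e => decide (CrossesCut ends P e) := by
  obtain ⟨k, hk⟩ := (h.iff_iff_even_countP_crossesCut ha hb).mp hab
  have hpos : es.countP (fun e => decide (CrossesCut ends P e)) ≠ 0 := by
    intro h0
    have hnc : ∀ e ∈ es, ¬CrossesCut ends P e := fun e he hc =>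
      List.countP_eq_zero.mp h0 e he (decide_eq_true hc)
    exact hPy ((h.iff_of_forall_not_crossesCut hnc hx hy).mp hPx)
  omega

end Walks

theorem edgeConnected_of_exists_crossesCut [Fintype V] [Fintype E] {k : ℕ} (r : V)
    (hV : 2 ≤ Fintype.card V)
    (hcut : ∀ (P : V → Prop) (y : V), P r → ¬P y →
      ∀ F : Finset E, F.card < k → ∃ e ∉ F, CrossesCut ends P e) :
    EdgeConnected ends k := by
  refine ⟨hV, fun F hF a b => ?_⟩
  by_contra hab
  set S : Set E := {e | e ∉ F}
  -- the side of `r` in `G - F`; one of `a`, `b` is not on it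
  let P : V → Prop := fun v => HasWalk ends S a v ↔ HasWalk ends S a r
  obtain ⟨y, hy⟩ : ∃ y, ¬P y := by
    by_cases har : HasWalk ends S a r
    · exact ⟨b, fun h => hab (h.mpr har)⟩
    · exact ⟨a, fun h => har (h.mp (hasWalk_self S a))⟩
  obtain ⟨e, heF, x, z, hxz, hcross⟩ := hcut P y Iff.rfl hy F hF
  have hstep : HasWalk ends S a x ↔ HasWalk ends S a z :=
    ⟨fun h => h.step heF hxz, fun h => h.step heF (hxz.trans Sym2.eq_swap)⟩
  exact hcross (by simp only [P, hstep])

namespace EarDecomposition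

theorem two_le_card [Fintype V] (D : EarDecomposition ends) : 2 ≤ Fintype.card V := by
  have hcard := D.first_nodup.length_le_card
  have hlen := (D.walk 0).length_eq
  have := D.first_not_loop
  rw [List.length_tail] at hcard
  omega

variable {D : EarDecomposition ends}

theorem eq_of_mem_edges {i j : Fin (D.len + 1)} {e : E} (hi : e ∈ (D.ears i).edges)
    (hj : e ∈ (D.ears j).edges) : i = j :=
  (D.partition e).unique hi hj

theorem exists_mem_verts_of_mem_coverVerts_remEdges {i : Fin (D.len + 1)} {x : V}
    (hx : x ∈ coverVerts ends (D.remEdges i)) : ∃ j, i < j ∧ x ∈ (D.ears j).verts := by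
  obtain ⟨e, ⟨j, hij, he⟩, hxe⟩ := hx
  exact ⟨j, hij, (D.walk j).mem_verts_of_mem_ends he hxe⟩

theorem exists_mem_innerVerts {i : Fin (D.len + 1)} (hi : 2 ≤ (D.ears i).edges.length) :
    ∃ x, x ∈ D.innerVerts i := by
  have hlen := (D.walk i).length_eq
  obtain ⟨d₀, d₁, ds, hv, hds⟩ :
      ∃ d₀ d₁ ds, (D.ears i).verts = d₀ :: d₁ :: ds ∧ ds ≠ [] := by
    rcases hv : (D.ears i).verts with _ | ⟨d₀, _ | ⟨d₁, ds⟩⟩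
    all_goals simp only [hv, List.length_cons, List.length_nil] at hlen
    · omega
    · omega
    · exact ⟨d₀, d₁, ds, rfl, by rintro rfl; simp at hlen; omega⟩
  refine ⟨d₁, by simp [hv], ?_⟩
  rintro ⟨j, hj, hd₁⟩
  refine D.ear_inner_new i (Nat.zero_lt_of_lt hj) d₁ ?_ j hj hd₁
  simp [hv, List.dropLast_cons_of_ne_nil hds]

open Classical in
theorem two_le_countP_crossesCut_of_minimal {P : V → Prop} {r y : V}
    (hr : r ∈ (D.ears 0).verts) (hPr : P r) {j : Fin (D.len + 1)}
    (hbefore : ∀ i < j, ∀ v ∈ (D.ears i).verts, P v)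
    (hy : y ∈ (D.ears j).verts) (hPy : ¬P y) :
    2 ≤ (D.ears j).edges.countP fun e => decide (CrossesCut ends P e) := by
  have hne := (D.walk j).ne_nil
  have ha := List.head?_eq_some_head hne
  have hb := List.getLast?_eq_some_getLast hne
  by_cases hj : (j : ℕ) = 0
  · obtain rfl : j = 0 := Fin.ext hj
    have hb' : (D.ears 0).verts.getLast? = some ((D.ears 0).verts.head hne) :=
      D.first_closed ▸ ha
    exact (D.walk 0).two_le_countP_crossesCut ha hb' Iff.rfl hr hPr hy hPy
  · have hend : ∀ x, (D.ears j).verts.head? = some x ∨ (D.ears j).verts.getLast? = some x →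
        P x := fun x hx =>
      let ⟨i, hi, hxi⟩ := D.ear_endpoints j (Nat.pos_of_ne_zero hj) x hx
      hbefore i hi x hxi
    exact (D.walk j).two_le_countP_crossesCut ha hb
      (iff_of_true (hend _ (.inl ha)) (hend _ (.inr hb))) (List.head_mem hne)
      (hend _ (.inl ha)) hy hPy

end EarDecomposition

section TwoOneEdgeOrder

variable {D : EarDecomposition ends} {rt ru : E}

theorem IsTwoOneEdgeOrder.exists_mem_verts_mem_coverVerts (hD : IsTwoOneEdgeOrder D rt ru)
    {i : Fin (D.len + 1)} (hi : (i : ℕ) < D.len) :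
    ∃ x ∈ (D.ears i).verts, x ∈ coverVerts ends (D.remEdges i) := by
  by_cases h1 : (D.ears i).edges.length = 1
  · obtain ⟨x, hx, hcov⟩ := (hD.2.2 i hi).2 h1
    exact ⟨x, hx.elim List.mem_of_mem_head? List.mem_of_mem_getLast?, hcov⟩
  · have h2 : 2 ≤ (D.ears i).edges.length := by
      have := List.length_pos_iff.mpr (D.ear_nonempty i)
      omega
    obtain ⟨x, hx⟩ := D.exists_mem_innerVerts h2
    exact ⟨x, hx.1, (hD.2.2 i hi).1 x hx⟩

theorem IsTwoOneEdgeOrder.exists_crossesCut_not_mem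
    (hD : IsTwoOneEdgeOrder D rt ru) {r y : V} (hr₀ : r ∈ (D.ears 0).verts)
    (hrl : r ∈ (D.ears (Fin.last D.len)).verts) {P : V → Prop} (hPr : P r) (hPy : ¬P y)
    (F : Finset E) (hF : F.card ≤ 2) : ∃ e ∉ F, CrossesCut ends P e := by
  classical
  by_contra! hFcross
  have hF' : ∀ e, CrossesCut ends P e → e ∈ F := fun e he => by_contra fun h => hFcross e h he
  let Y : Set (Fin (D.len + 1)) := {j | ∃ v ∈ (D.ears j).verts, ¬P v}
  have hY : Y.Nonempty := ⟨(D.covers y).choose, y, (D.covers y).choose_spec, hPy⟩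
  obtain ⟨j, ⟨yj, hyj, hPyj⟩, hjmin⟩ := wellFounded_lt.has_min Y hY
  obtain ⟨K, ⟨yK, hyK, hPyK⟩, hKmax⟩ := wellFounded_gt.has_min Y hY
  have hbefore : ∀ i < j, ∀ v ∈ (D.ears i).verts, P v :=
    fun i hi v hv => by_contra fun h => hjmin i ⟨v, hv, h⟩ hi
  have hcount := D.two_le_countP_crossesCut_of_minimal hr₀ hPr hbefore hyj hPyj
  have hcross : ∀ e, CrossesCut ends P e → e ∈ (D.ears j).edges := fun e he =>
    (D.edges_nodup j).mem_of_card_le_countP (fun e _ he => hF' e (of_decide_eq_true he))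
      (hF.trans hcount) (hF' e he)
  have hlast : ∀ v ∈ (D.ears (Fin.last D.len)).verts, P v := by
    have hnc : ∀ e ∈ (D.ears (Fin.last D.len)).edges, ¬CrossesCut ends P e := by
      intro e he hc
      rw [EarDecomposition.eq_of_mem_edges (hcross e hc) he, hD.2.1] at hcount
      exact absurd (hcount.trans List.countP_le_length) (by simp)
    exact fun v hv => ((D.walk _).iff_of_forall_not_crossesCut hnc hrl hv).mp hPr
  have hK : (K : ℕ) < D.len := Fin.val_lt_last fun h => hPyK (hlast yK (h ▸ hyK))
  have hnotcov : ∀ v, ¬P v → v ∉ coverVerts ends (D.remEdges K) := fun v hv hcov =>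
    let ⟨i, hi, hvi⟩ := EarDecomposition.exists_mem_verts_of_mem_coverVerts_remEdges hcov
    hKmax i ⟨v, hvi, hv⟩ hi
  rcases eq_or_ne K j with rfl | hKj
  · have hinner : yK ∈ D.innerVerts K :=
      ⟨hyK, fun ⟨i, hi, hv⟩ => hPyK (hbefore i hi yK hv)⟩
    exact hnotcov yK hPyK ((hD.2.2 K hK).1 yK hinner)
  · obtain ⟨x, hx, hxcov⟩ := hD.exists_mem_verts_mem_coverVerts hK
    have hnc : ∀ e ∈ (D.ears K).edges, ¬CrossesCut ends P e :=
      fun e he hc => hKj (EarDecomposition.eq_of_mem_edges he (hcross e hc))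
    have hPx : ¬P x :=
      fun hPx => hPyK (((D.walk K).iff_of_forall_not_crossesCut hnc hx hyK).mp hPx)
    exact hnotcov x hPx hxcov

end TwoOneEdgeOrder

theorem statement_3_general {V E : Type} [Fintype V] [Fintype E] (ends : E → Sym2 V)
    (rt ru : E) (r t u : V)
    (hrt : ends rt = s(r, t)) (hru : ends ru = s(r, u))
    (D : EarDecomposition ends) (hD : IsTwoOneEdgeOrder D rt ru) :
    EdgeConnected ends 3 := by
  have hr₀ : r ∈ (D.ears 0).verts :=
    (D.walk 0).mem_verts_of_mem_ends hD.1 (by simp [hrt])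
  have hrl : r ∈ (D.ears (Fin.last D.len)).verts :=
    (D.walk _).mem_verts_of_mem_ends (e := ru) (by simp [hD.2.1]) (by simp [hru])
  exact edgeConnected_of_exists_crossesCut r D.two_le_card fun P _ hPr hPy F hF =>
    hD.exists_crossesCut_not_mem hr₀ hrl hPr hPy F (by omega)

/-- If a multigraph `G` has a (2,1)-edge-order (through some
edge `rt` and avoiding some edge `ru`), then `G` is 3-edge-connected. -/
theorem statement_3 {V E : Type} [Fintype V] [Fintype E] (ends : E → Sym2 V)
    (rt ru : E) (r t u : V)
    (hrt : ends rt = s(r, t)) (hru : ends ru = s(r, u)) (hne : rt ≠ ru)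
    (D : EarDecomposition ends) (hD : IsTwoOneEdgeOrder D rt ru) :
    EdgeConnected ends 3 :=
  statement_3_general ends rt ru r t u hrt hru D hD

end EdgeOrders
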